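/- arXiv:2507.01723 — 4 statements merged into one kernel-verified Lean document; each statement's English description precedes it below -/
import Mathlib

section
/- Let $n$ be a positive natural number and work in the Euclidean space $\mathbb{R}^n$ with its standard inner product $\langle\cdot,\cdot\rangle$ and norm $\|\cdot\|$. For $h, \gamma, \beta \in \mathbb{R}^n$ with $h \neq 0$, define the spherical FiLM layer $\mathrm{SFiLM}(h \mid \gamma, \beta) = \langle \gamma, h\rangle \, \frac{h}{\|h\|} + \beta$. Then for every orthogonal matrix $D \in O(n)$ and every $h \neq 0$, $D \cdot \mathrm{SFiLM}(h \mid \gamma, \beta) = \mathrm{SFiLM}(D h \mid D\gamma, D\beta)$; that is, the SFiLM layer is equivariant with respect to the orthogonal group (in particular with respect to all Wigner D-matrices, which are orthogonal). -/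
open scoped RealInnerProductSpace
open Matrix

lemma dot_inv {n : ℕ} {D : Matrix (Fin n) (Fin n) ℝ}
    (hD : D ∈ Matrix.orthogonalGroup (Fin n) ℝ) (x y : Fin n → ℝ) :
    D.mulVec x ⬝ᵥ D.mulVec y = x ⬝ᵥ y := by
  have hDT : Dᵀ * D = 1 := by
    simpa [Matrix.star_eq_conjTranspose] using
      (Matrix.mem_orthogonalGroup_iff' (Fin n) ℝ).mp hD
  rw [Matrix.dotProduct_mulVec, ← Matrix.mulVec_transpose, Matrix.mulVec_mulVec, hDT,
    Matrix.one_mulVec]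

/-- The spherical FiLM layer
`SFiLM(h | γ, β) = ⟪γ, h⟫ • h / ‖h‖ + β` is equivariant with respect to the
orthogonal group `O(n)` (in particular with respect to all Wigner D-matrices). -/
theorem sfilm_equivariant
    (n : ℕ) (hn : 0 < n)
    (SFiLM : EuclideanSpace ℝ (Fin n) → EuclideanSpace ℝ (Fin n) →
      EuclideanSpace ℝ (Fin n) → EuclideanSpace ℝ (Fin n))
    (hSFiLM : ∀ h γ β : EuclideanSpace ℝ (Fin n),
      SFiLM h γ β = ⟪γ, h⟫ • (‖h‖⁻¹ • h) + β)
    (D : Matrix (Fin n) (Fin n) ℝ) (hD : D ∈ Matrix.orthogonalGroup (Fin n) ℝ)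
    (h γ β : EuclideanSpace ℝ (Fin n)) (hh : h ≠ 0) :
    (WithLp.toLp 2 (D.mulVec (SFiLM h γ β)) : EuclideanSpace ℝ (Fin n)) =
      SFiLM (WithLp.toLp 2 (D.mulVec h)) (WithLp.toLp 2 (D.mulVec γ)) (WithLp.toLp 2 (D.mulVec β)) := by
  have hinner : ∀ x y : EuclideanSpace ℝ (Fin n),
      @inner ℝ (EuclideanSpace ℝ (Fin n)) _ (WithLp.toLp 2 (D.mulVec x)) (WithLp.toLp 2 (D.mulVec y)) = ⟪x, y⟫ := by
    intro x y
    simp only [PiLp.inner_apply, RCLike.inner_apply, conj_trivial]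
    simpa [dotProduct, mul_comm] using dot_inv hD x.ofLp y.ofLp
  have hnorm : @norm (EuclideanSpace ℝ (Fin n)) _ (WithLp.toLp 2 (D.mulVec h)) = ‖h‖ := by
    have h1 := hinner h h
    rw [real_inner_self_eq_norm_sq, real_inner_self_eq_norm_sq] at h1
    nlinarith [@norm_nonneg (EuclideanSpace ℝ (Fin n)) _ (WithLp.toLp 2 (D.mulVec h)), norm_nonneg h]
  rw [hSFiLM, hSFiLM, hinner γ h, hnorm]
  ext i
  simp only [PiLp.add_apply, PiLp.smul_apply, smul_eq_mul, Matrix.mulVec, dotProduct,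
    mul_add, Finset.sum_add_distrib, Finset.mul_sum]
  congr 1
  exact Finset.sum_congr rfl fun j _ => by ring
end

section
/- Let $G$ be a group acting on a set $\mathcal{S}$ (the state space) and acting on an additive commutative group $V$ (the action space) by additive automorphisms, i.e. $g\cdot(a + b) = g\cdot a + g\cdot b$ for all $g \in G$, $a, b \in V$. Let $\pi : \mathcal{S} \to V$ be a $G$-equivariant policy, $\pi(g\cdot s) = g\cdot \pi(s)$, and let $k$ be a fixed denoising step. Suppose the denoising function $\epsilon_\theta : \mathcal{S} \to V \to V$ satisfies $\epsilon_\theta(s, \pi(s) + e) = e$ for every state $s \in \mathcal{S}$ and every noise $e \in V$. Then $\epsilon_\theta$ is $G$-equivariant: $\epsilon_\theta(g\cdot s, g\cdot a) = g\cdot \epsilon_\theta(s, a)$ for all $g \in G$, $s \in \mathcal{S}$, $a \in V$. -/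
/-- Diffuse equivariance: if the policy `π` is `G`-equivariant,
`G` acts on the action space `V` by additive automorphisms, and the denoising
function recovers the noise exactly, `εθ s (π s + e) = e`, then the denoising
function is `G`-equivariant. -/
theorem diffuse_equivariance
    {G : Type*} [Group G] {S : Type*} [MulAction G S]
    {V : Type*} [AddCommGroup V] [MulAction G V]
    (hadd : ∀ (g : G) (a b : V), g • (a + b) = g • a + g • b)
    (π : S → V) (hπ : ∀ (g : G) (s : S), π (g • s) = g • π s)
    (εθ : S → V → V)
    (hε : ∀ (s : S) (e : V), εθ s (π s + e) = e) :
    ∀ (g : G) (s : S) (a : V), εθ (g • s) (g • a) = g • εθ s a := by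
  intro g s a
  have ha : a = π s + (a - π s) := by abel
  calc εθ (g • s) (g • a)
      = εθ (g • s) (π (g • s) + g • (a - π s)) := by
        rw [hπ, ← hadd, ← ha]
    _ = g • (a - π s) := hε _ _
    _ = g • εθ s a := by
        conv_rhs => rw [ha, hε]
end

section
/- Let $G$ be a group acting on a set $\mathcal{S}$ and acting linearly on a real vector space $V$ (i.e. $g\cdot(a+b) = g\cdot a + g\cdot b$ and $g\cdot(c\,a) = c\,(g\cdot a)$). Let $K \in \mathbb{N}$, let $\alpha, \gamma : \mathbb{N} \to \mathbb{R}$ be noise-schedule coefficients, let $z : \mathbb{N} \to V$ be a sequence of noises, and let $\epsilon_\theta : \mathcal{S} \to V \to \mathbb{N} \to V$ be a step-indexed denoising function that is $G$-equivariant at every step: $\epsilon_\theta(g\cdot s, g\cdot a, k) = g\cdot \epsilon_\theta(s, a, k)$ for all $k$. Define the denoising recursion from an initial action $A^K \in V$ by $A^{k-1} = \alpha_k\big(A^k - \gamma_k\, \epsilon_\theta(S, A^k, k) + z_k\big)$ for $k = K, K-1, \dots, 1$, and write $\mathrm{Denoise}(S, A^K, z) = A^0$ for the resulting final iterate. Then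 for every $g \in G$, $\mathrm{Denoise}\big(g\cdot S,\; g\cdot A^K,\; (g\cdot z_k)_k\big) = g\cdot \mathrm{Denoise}(S, A^K, z)$; that is, the entire $K$-step reverse diffusion trajectory, and in particular the final generated action $A^0$, is $G$-equivariant when the state, the initial sample, and all intermediate noises are transformed by $g$. -/
/-- The `K`-step reverse diffusion (denoising) recursion: starting from an
initial action `a = A^K`, iterate `A^(k-1) = α k • (A^k - γ k • εθ S A^k k + z k)`
for `k = K, K-1, …, 1`, producing the final iterate `A^0`. -/
noncomputable def Denoise {S V : Type*} [AddCommGroup V] [Module ℝ V]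
    (α γ : ℕ → ℝ) (εθ : S → V → ℕ → V) (s : S) (z : ℕ → V) :
    ℕ → V → V
  | 0, a => a
  | (k + 1), a =>
      Denoise α γ εθ s z k
        (α (k + 1) • (a - γ (k + 1) • εθ s a (k + 1) + z (k + 1)))

/-- the entire `K`-step reverse diffusion trajectory, and in
particular the final generated action `A^0`, is `G`-equivariant when the state,
the initial sample, and all intermediate noises are transformed by `g`. -/
theorem denoise_equivariant
    {G : Type*} [Group G] {S : Type*} [MulAction G S]
    {V : Type*} [AddCommGroup V] [Module ℝ V] [MulAction G V]
    (hadd : ∀ (g : G) (a b : V), g • (a + b) = g • a + g • b)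
    (hsmul : ∀ (g : G) (c : ℝ) (a : V), g • (c • a) = c • (g • a))
    (K : ℕ) (α γ : ℕ → ℝ) (z : ℕ → V)
    (εθ : S → V → ℕ → V)
    (hε : ∀ (g : G) (s : S) (a : V) (k : ℕ),
      εθ (g • s) (g • a) k = g • εθ s a k)
    (g : G) (s : S) (A : V) :
    Denoise α γ εθ (g • s) (fun k => g • z k) K (g • A) =
      g • Denoise α γ εθ s z K A := by
  have hneg : ∀ (g : G) (a : V), g • (-a) = -(g • a) := by
    intro g a
    have := hsmul g (-1 : ℝ) a
    simpa using this
  have hsub : ∀ (g : G) (a b : V), g • (a - b) = g • a - g • b := by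
    intro g a b
    rw [sub_eq_add_neg, hadd, hneg, sub_eq_add_neg]
  induction K generalizing A with
  | zero => rfl
  | succ k ih =>
    simp only [Denoise]
    rw [← ih]
    congr 1
    rw [hε, ← hsmul, ← hsub, ← hadd, ← hsmul]
end

section
/- Let $n$ be a positive natural number, let $Q \in O(n)$ be an orthogonal $n\times n$ real matrix, and let $\mu$ be a Borel measure on $\mathbb{R}^n$ that is invariant under $Q$, i.e. the pushforward of $\mu$ under the map $z \mapsto Qz$ equals $\mu$. Let $\mathcal{S}$ be a set on which $Q$ acts via some map $s \mapsto Q\cdot s$, and let $\epsilon_\theta : \mathcal{S} \to \mathbb{R}^n \to \mathbb{R}^n$ satisfy $\epsilon_\theta(Q\cdot s, Q a) = Q\,\epsilon_\theta(s, a)$ for all $s, a$. Fix scalars $\alpha, \gamma \in \mathbb{R}$, a state $s \in \mathcal{S}$, and a noisy action $a \in \mathbb{R}^n$, and assume the map $z \mapsto \alpha(a - \gamma\,\epsilon_\theta(s,a) + z)$ is measurable (it is a translation followed by scaling, hence continuous). Then the pushforward of $\mu$ under the denoising map for the transformed inputs equals the $Q$-pushforward of the pushforward of $\mu$ under the original denoising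 map: $\big(z \mapsto \alpha(Qa - \gamma\,\epsilon_\theta(Q\cdot s, Qa) + z)\big)_{*}\mu \;=\; \big(z \mapsto Q\,\alpha(a - \gamma\,\epsilon_\theta(s,a) + z)\big)_{*}\mu$. Consequently, the conditional distribution of the denoised action $A^{k-1}$ given the transformed state $Q\cdot s$ and transformed noisy action $Qa$ is the image under $Q$ of the conditional distribution given $s$ and $a$. -/
open MeasureTheory

/-- Denoise equivariance in distribution: if the noise measure
`μ` on `ℝⁿ` is invariant under the orthogonal matrix `Q` and the denoising
function `εθ` is equivariant, then the distribution of the denoised action for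
the transformed state and noisy action is the image under `Q` of the
distribution for the original inputs. -/
theorem denoise_distribution_equivariant
    (n : ℕ) (hn : 0 < n)
    (Q : Matrix (Fin n) (Fin n) ℝ) (hQ : Q ∈ Matrix.orthogonalGroup (Fin n) ℝ)
    (μ : Measure (Fin n → ℝ))
    (hμ : Measure.map (fun z => Q.mulVec z) μ = μ)
    (𝒮 : Type*) (act : 𝒮 → 𝒮)
    (εθ : 𝒮 → (Fin n → ℝ) → (Fin n → ℝ))
    (hε : ∀ (s : 𝒮) (a : Fin n → ℝ),
      εθ (act s) (Q.mulVec a) = Q.mulVec (εθ s a))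
    (α γ : ℝ) (s : 𝒮) (a : Fin n → ℝ)
    (hmeas : Measurable fun z : Fin n → ℝ => α • (a - γ • εθ s a + z)) :
    Measure.map
        (fun z : Fin n → ℝ =>
          α • (Q.mulVec a - γ • εθ (act s) (Q.mulVec a) + z)) μ =
      Measure.map
        (fun z : Fin n → ℝ => Q.mulVec (α • (a - γ • εθ s a + z))) μ := by
  have hQmeas : Measurable fun z : Fin n → ℝ => Q.mulVec z :=
    (Matrix.mulVecLin Q).continuous_of_finiteDimensional.measurable
  have hfmeas : Measurable fun z : Fin n → ℝ =>
      α • (Q.mulVec a - γ • εθ (act s) (Q.mulVec a) + z) := by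
    exact (measurable_const_smul α).comp (measurable_const.add measurable_id)
  calc Measure.map
        (fun z : Fin n → ℝ =>
          α • (Q.mulVec a - γ • εθ (act s) (Q.mulVec a) + z)) μ
      = Measure.map
        (fun z : Fin n → ℝ =>
          α • (Q.mulVec a - γ • εθ (act s) (Q.mulVec a) + z))
        (Measure.map (fun z => Q.mulVec z) μ) := by rw [hμ]
    _ = Measure.map
        (fun z : Fin n → ℝ =>
          α • (Q.mulVec a - γ • εθ (act s) (Q.mulVec a) + Q.mulVec z)) μ := by
        rw [Measure.map_map hfmeas hQmeas]; rfl
    _ = Measure.map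
        (fun z : Fin n → ℝ => Q.mulVec (α • (a - γ • εθ s a + z))) μ := by
        congr 1
        funext z
        rw [hε]
        simp [Matrix.mulVec_smul, Matrix.mulVec_add, Matrix.mulVec_sub]
end
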